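/- arXiv:2101.02838 — 2 statements merged into one kernel-verified Lean document; each statement's English description precedes it below -/
import Mathlib

section
/- Let W be a (k,3)-completeness-resolving set of a finite connected simple graph G. Then no two vertices of W are adjacent in G, i.e., the induced subgraph of G on W has no edges. -/
open SimpleGraph

/-- `w` enumerates a `(k, m)`-completeness-resolving set of `G`:
`w` is injective, its range `W` is a proper subset of the vertex set, and the map
`u ↦ (dist (w 1) u, …, dist (w k) u)` is a bijection from `V ∖ W` onto `[m]^k`. -/
def IsCRS {V : Type*} (G : SimpleGraph V) {k : ℕ} (w : Fin k → V) (m : ℕ) : Prop :=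
  Function.Injective w ∧ Set.range w ≠ Set.univ ∧
    Function.Injective
      (fun u : {u : V // u ∉ Set.range w} => fun i : Fin k => G.dist (w i) u.1) ∧
    Set.range (fun u : {u : V // u ∉ Set.range w} => fun i : Fin k => G.dist (w i) u.1) =
      {x : Fin k → ℕ | ∀ i, 1 ≤ x i ∧ x i ≤ m}

/-- `G` is a `(k, m)`-completeness-resolvable graph. -/
def IsCRG {V : Type*} (G : SimpleGraph V) (k m : ℕ) : Prop :=
  ∃ w : Fin k → V, IsCRS G w m

/-- `G` is completeness-resolvable. -/
def CompletenessResolvable {V : Type*} (G : SimpleGraph V) : Prop :=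
  ∃ (k m : ℕ) (w : Fin k → V), IsCRS G w m

/-! ### The family `B_k`.
Tuples in `[2]^k` are modelled as functions `Fin k → Fin 2`, the `Fin 2`-value `j`
corresponding to the entry `j + 1 ∈ {1, 2}`. -/

/-- The graph `H1 ∘ H2` on `[k] ⊔ [2]^k`. -/
def comp2 {k : ℕ} (H1 : SimpleGraph (Fin k)) (H2 : SimpleGraph (Fin k → Fin 2)) :
    SimpleGraph (Fin k ⊕ (Fin k → Fin 2)) where
  Adj a b :=
    match a, b with
    | Sum.inl i, Sum.inl j => H1.Adj i j
    | Sum.inr x, Sum.inr y => H2.Adj x y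
    | Sum.inl i, Sum.inr x => x i = 0
    | Sum.inr x, Sum.inl i => x i = 0
  symm := by
    constructor
    rintro (i | x) (j | y) h
    · exact H1.adj_symm h
    · exact h
    · exact h
    · exact H2.adj_symm h
  loopless := by
    constructor
    rintro (i | x) h
    · exact H1.loopless.irrefl i h
    · exact H2.loopless.irrefl x h

/-- The defining condition of `B_k`: for each `i`, the edges of `H2` lying in the complete
bipartite graph `B_i^k` (i.e. joining a tuple with `i`-th entry `1` to one with `i`-th entry `2`)
cover every tuple all of whose entries on the closed neighbourhood of `i` in `H1` equal `2`. -/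
def BCond {k : ℕ} (H1 : SimpleGraph (Fin k)) (H2 : SimpleGraph (Fin k → Fin 2)) : Prop :=
  ∀ (i : Fin k) (x : Fin k → Fin 2),
    (∀ j : Fin k, (j = i ∨ H1.Adj i j) → x j = 1) →
    ∃ y : Fin k → Fin 2, H2.Adj x y ∧ y i ≠ x i

/-- The family `B_k`, as a set of graphs on `[k] ⊔ [2]^k`. -/
def Bset (k : ℕ) : Set (SimpleGraph (Fin k ⊕ (Fin k → Fin 2))) :=
  {G | ∃ H1 H2, BCond H1 H2 ∧ G = comp2 H1 H2}

/-- `H2` is `H1`-minimal. -/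
def H1Minimal {k : ℕ} (H1 : SimpleGraph (Fin k)) (H2 : SimpleGraph (Fin k → Fin 2)) : Prop :=
  comp2 H1 H2 ∈ Bset k ∧
    ∀ H2' : SimpleGraph (Fin k → Fin 2), H2' < H2 → comp2 H1 H2' ∉ Bset k

/-- The graph `U_k` on `[2]^k`, with unique edge `{(1,…,1), (2,…,2)}`. -/
def Uk (k : ℕ) : SimpleGraph (Fin k → Fin 2) :=
  SimpleGraph.fromEdgeSet {s(fun _ => (0 : Fin 2), fun _ => (1 : Fin 2))}

/-- The graph `V_k` on `[2]^k`, whose edges join `(2,…,2)` to the tuples having exactly one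
entry equal to `1`. -/
def Vk (k : ℕ) : SimpleGraph (Fin k → Fin 2) :=
  SimpleGraph.fromEdgeSet
    {e | ∃ i : Fin k, e = s(Function.update (fun _ => (1 : Fin 2)) i 0, fun _ => (1 : Fin 2))}

/-- The graph `R_k` on `[2]^k`: the perfect matching pairing each tuple with its complement. -/
def Rk (k : ℕ) : SimpleGraph (Fin k → Fin 2) :=
  SimpleGraph.fromRel fun x y => ∀ i, x i ≠ y i

/-- The hypercube graph `Q_k` on `[2]^k`: tuples are adjacent when they differ in exactly one
coordinate. -/
def Qk (k : ℕ) : SimpleGraph (Fin k → Fin 2) :=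
  SimpleGraph.fromRel fun x y => ∃ i, x i ≠ y i ∧ ∀ j, j ≠ i → x j = y j

/-! ### The family `C_k`.
Tuples in `[3]^k` are modelled as functions `Fin k → Fin 3`, the `Fin 3`-value `j`
corresponding to the entry `j + 1 ∈ {1, 2, 3}`. -/

/-- Entries `a` and `b` (of `{1,2,3}`, coded in `Fin 3`) satisfy `|a - b| ≤ 1`. -/
def near3 (a b : Fin 3) : Prop := (a : ℕ) ≤ (b : ℕ) + 1 ∧ (b : ℕ) ≤ (a : ℕ) + 1

/-- `{x, y}` is an edge of the bipartite graph `C_i^k` (between `i`-th entry `1` and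
`i`-th entry `2`, with all other entries differing by at most `1`). -/
def CAdj {k : ℕ} (i : Fin k) (x y : Fin k → Fin 3) : Prop :=
  ((x i = 0 ∧ y i = 1) ∨ (x i = 1 ∧ y i = 0)) ∧ ∀ t, t ≠ i → near3 (x t) (y t)

/-- `{x, y}` is an edge of the bipartite graph `D_i^k` (between `i`-th entry `2` and
`i`-th entry `3`, with all other entries differing by at most `1`). -/
def DAdj {k : ℕ} (i : Fin k) (x y : Fin k → Fin 3) : Prop :=
  ((x i = 1 ∧ y i = 2) ∨ (x i = 2 ∧ y i = 1)) ∧ ∀ t, t ≠ i → near3 (x t) (y t)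

/-- The graph `K̄_[k] ∘ H2` on `[k] ⊔ [3]^k`. -/
def comp3 {k : ℕ} (H2 : SimpleGraph (Fin k → Fin 3)) :
    SimpleGraph (Fin k ⊕ (Fin k → Fin 3)) where
  Adj a b :=
    match a, b with
    | Sum.inl _, Sum.inl _ => False
    | Sum.inr x, Sum.inr y => H2.Adj x y
    | Sum.inl i, Sum.inr x => x i = 0
    | Sum.inr x, Sum.inl i => x i = 0
  symm := by
    constructor
    rintro (i | x) (j | y) h
    · exact h
    · exact h
    · exact h
    · exact H2.adj_symm h
  loopless := by
    constructor
    rintro (i | x) h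
    · exact h
    · exact H2.loopless.irrefl x h

/-- The defining condition of `C_k`: every edge of `H2` lies in some `C_i^k` or `D_i^k`;
for each `i` the edges of `H2` in `C_i^k` cover `[3]^k_i(2)`, and the edges of `H2` in
`D_i^k` cover `S_i^k`. -/
def CCond {k : ℕ} (H2 : SimpleGraph (Fin k → Fin 3)) : Prop :=
  (∀ x y, H2.Adj x y → ∃ i, CAdj i x y ∨ DAdj i x y) ∧
  (∀ (i : Fin k) (x : Fin k → Fin 3), x i = 1 → ∃ y, H2.Adj x y ∧ CAdj i x y) ∧
  (∀ (i : Fin k) (x : Fin k → Fin 3), x i = 2 → (∀ t, x t ≠ 0) →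
    ∃ y, H2.Adj x y ∧ DAdj i x y)

/-- The family `C_k`, as a set of graphs on `[k] ⊔ [3]^k`. -/
def Cset (k : ℕ) : Set (SimpleGraph (Fin k ⊕ (Fin k → Fin 3))) :=
  {G | ∃ H2, CCond H2 ∧ G = comp3 H2}

/-- The graph `Γ_k` on `[3]^k`: distinct tuples are adjacent when all their entries differ
by at most `1`. -/
def GammaK (k : ℕ) : SimpleGraph (Fin k → Fin 3) :=
  SimpleGraph.fromRel fun x y => ∀ i, near3 (x i) (y i)

/-- `H2` is `k`-minimal. -/
def KMinimalC {k : ℕ} (H2 : SimpleGraph (Fin k → Fin 3)) : Prop :=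
  comp3 H2 ∈ Cset k ∧
    ∀ H2' : SimpleGraph (Fin k → Fin 3), H2' < H2 → comp3 H2' ∉ Cset k

/-!
Some vertex `u` realises the tuple with entry `m` at position `i` and `1` everywhere else.
If `w i` and `w j` were adjacent, the path `w i, w j, u` would give `d(w i, u) ≤ 2 < m`.
-/

theorem SimpleGraph.dist_le_two_of_adj_of_adj {V : Type*} {G : SimpleGraph V} {a b c : V}
    (hab : G.Adj a b) (hbc : G.Adj b c) : G.dist a c ≤ 2 :=
  dist_le (Walk.cons hab (Walk.cons hbc Walk.nil))

theorem IsCRS.exists_dist_eq {V : Type*} {G : SimpleGraph V} {k m : ℕ} {w : Fin k → V}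
    (h : IsCRS G w m) (x : Fin k → ℕ) (hx : ∀ i, 1 ≤ x i ∧ x i ≤ m) :
    ∃ u, ∀ i, G.dist (w i) u = x i := by
  obtain ⟨u, hu⟩ := h.2.2.2.symm.subset hx
  exact ⟨u.1, congrFun hu⟩

theorem IsCRS.not_adj {V : Type*} {G : SimpleGraph V} {k m : ℕ} {w : Fin k → V}
    (h : IsCRS G w m) (hm : 3 ≤ m) (i j : Fin k) : ¬ G.Adj (w i) (w j) := by
  intro hadj
  have hji : j ≠ i := by rintro rfl; exact G.loopless.irrefl _ hadj
  obtain ⟨u, hu⟩ := h.exists_dist_eq (fun t => if t = i then m else 1)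
    (fun t => by split <;> omega)
  have hui : G.dist (w i) u = m := by simpa using hu i
  have huj : G.dist (w j) u = 1 := by simpa [hji] using hu j
  have := dist_le_two_of_adj_of_adj hadj (dist_eq_one_iff_adj.mp huj)
  omega

theorem crs_three_null_general {V : Type*} (G : SimpleGraph V) (k : ℕ) (w : Fin k → V)
    (h : IsCRS G w 3) :
    ∀ i j : Fin k, ¬ G.Adj (w i) (w j) :=
  h.not_adj le_rfl

/-- **Lemma.** If `W` is a `(k,3)`-completeness-resolving set of a finite connected simple
graph `G`, then the induced subgraph of `G` on `W` has no edges. -/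
theorem crs_three_null {V : Type*} [Fintype V] (G : SimpleGraph V) (hconn : G.Connected)
    (hcard : 2 ≤ Fintype.card V) (k : ℕ) (w : Fin k → V) (h : IsCRS G w 3) :
    ∀ i j : Fin k, ¬ G.Adj (w i) (w j) :=
  crs_three_null_general G k w h
end

section
/- Let k ≥ 2, let H1 be a graph on [k], and let d_i denote the degree of the vertex i in H1. If a graph H2 on [2]^k is H1-minimal, then 2^{k − min{d_i : i ∈ [k]} − 1} ≤ |E(H2)| ≤ Σ_{i=1}^{k} 2^{k − d_i − 1}. -/
/-!
Both bounds count the sets `S_i = [2]^k_{H1(i)}(2)`, of size `2^(k - d_i - 1)`. Every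
`x ∈ S_i` needs an `H2`-edge to a tuple `y` with `y i = 1`, hence `y ∉ S_i`; these edges are
pairwise distinct, which gives the lower bound. By minimality, every edge of `H2` is the only
edge serving some demand `(i, x)` with `x ∈ S_i`, and a demand that is met is served by at most
one edge, so charging edges to demands is injective: this gives the upper bound.
-/

open SimpleGraph

open Finset

namespace SimpleGraph

variable {V : Type*} (G : SimpleGraph V)

theorem deleteEdges_singleton_lt {e : Sym2 V} (he : e ∈ G.edgeSet) : G.deleteEdges {e} < G :=
  (deleteEdges_le _).lt_of_ne fun h => Set.disjoint_singleton_right.1 (deleteEdges_eq_self.1 h) he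

variable {ι : Type*}

def MeetsDemands (S : ι → Finset V) (R : ι → V → V → Prop) : Prop :=
  ∀ i, ∀ x ∈ S i, ∃ y, G.Adj x y ∧ R i x y

variable [Fintype V] [DecidableRel G.Adj]

theorem card_le_card_edgeFinset_of_forall_exists_adj_notMem (S : Finset V)
    (hS : ∀ x ∈ S, ∃ y ∉ S, G.Adj x y) : #S ≤ #G.edgeFinset := by
  choose! f hfS hfAdj using hS
  refine Finset.card_le_card_of_injOn (fun x => s(x, f x))
    (fun x hx => G.mem_edgeFinset.2 (hfAdj x hx)) fun x hx x' hx' hxx' => ?_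
  rcases Sym2.eq_iff.1 hxx' with ⟨h, -⟩ | ⟨h, -⟩
  · exact h
  · exact absurd (h ▸ hx : f x' ∈ S) (hfS x' hx')

variable [Fintype ι]

theorem card_edgeFinset_le_sum_of_minimal_meetsDemands {S : ι → Finset V}
    {R : ι → V → V → Prop} (hG : G.MeetsDemands S R)
    (hmin : ∀ e ∈ G.edgeSet, ¬ (G.deleteEdges {e}).MeetsDemands S R) :
    #G.edgeFinset ≤ ∑ i, #(S i) := by
  rw [← card_sigma]
  refine card_le_card_of_forall_subsingleton
    (fun e p => ∀ y, G.Adj p.2 y → R p.1 p.2 y → s(p.2, y) = e) (fun e he => ?_)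
    fun p hp e he e' he' => ?_
  · simp only [MeetsDemands, deleteEdges_adj, Set.mem_singleton_iff, not_forall,
      not_exists, not_and] at hmin
    obtain ⟨i, x, hx, hno⟩ := hmin e (mem_edgeFinset.1 he)
    exact ⟨⟨i, x⟩, by simpa using hx,
      fun y hxy hR => by_contra fun hne => hno y ⟨hxy, hne⟩ hR⟩
  · obtain ⟨y, hxy, hR⟩ := hG p.1 p.2 (by simpa using hp)
    exact (he.2 y hxy hR).symm.trans (he'.2 y hxy hR)

end SimpleGraph

theorem Finset.card_filter_forall_mem_eq {ι α : Type*} [Fintype ι] [DecidableEq ι] [Fintype α]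
    (A : Finset ι) (a : α) [DecidablePred fun x : ι → α => ∀ j ∈ A, x j = a] :
    #{x : ι → α | ∀ j ∈ A, x j = a} = Fintype.card α ^ (Fintype.card ι - #A) := by
  have : ({x : ι → α | ∀ j ∈ A, x j = a} : Finset (ι → α)) =
      Fintype.piFinset fun j => if j ∈ A then {a} else univ := by
    ext x
    simp only [mem_filter, mem_univ, true_and, Fintype.mem_piFinset]
    refine ⟨fun h j => ?_, fun h j hj => by simpa [hj] using h j⟩
    split_ifs with hj
    · simp [h j hj]
    · simp
  rw [this, Fintype.card_piFinset]
  simp only [apply_ite card, card_singleton, card_univ]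
  rw [prod_ite, prod_const_one, one_mul, prod_const,
    filter_not, filter_mem_eq_inter, univ_inter, card_sdiff_of_subset (subset_univ A), card_univ]

theorem comp2_injective {k : ℕ} {H1 H1' : SimpleGraph (Fin k)}
    {H2 H2' : SimpleGraph (Fin k → Fin 2)} (h : comp2 H1 H2 = comp2 H1' H2') :
    H1 = H1' ∧ H2 = H2' := by
  constructor <;> ext a b
  · exact iff_of_eq (congrArg (fun G => G.Adj (.inl a) (.inl b)) h)
  · exact iff_of_eq (congrArg (fun G => G.Adj (.inr a) (.inr b)) h)

theorem comp2_mem_Bset_iff {k : ℕ} (H1 : SimpleGraph (Fin k))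
    (H2 : SimpleGraph (Fin k → Fin 2)) :
    comp2 H1 H2 ∈ Bset k ↔ BCond H1 H2 := by
  refine ⟨?_, fun hB => ⟨H1, H2, hB, rfl⟩⟩
  rintro ⟨H1', H2', hB, h⟩
  obtain ⟨rfl, rfl⟩ := comp2_injective h
  exact hB

section closedNeighborhood

variable {k : ℕ} (H1 : SimpleGraph (Fin k)) [DecidableRel H1.Adj]

/-- The set `[2]^k_{H1(i)}(2)`. -/
def twosOnClosedNeighborhood (i : Fin k) : Finset (Fin k → Fin 2) :=
  {x | ∀ j ∈ insert i (H1.neighborFinset i), x j = 1}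

theorem card_twosOnClosedNeighborhood (i : Fin k) :
    #(twosOnClosedNeighborhood H1 i) = 2 ^ (k - H1.degree i - 1) := by
  rw [twosOnClosedNeighborhood, Finset.card_filter_forall_mem_eq, Finset.card_insert_of_notMem
    (H1.notMem_neighborFinset_self i), card_neighborFinset_eq_degree, Fintype.card_fin,
    Fintype.card_fin, Nat.sub_sub]

theorem bCond_iff_meetsDemands (H2 : SimpleGraph (Fin k → Fin 2)) :
    BCond H1 H2 ↔ H2.MeetsDemands (twosOnClosedNeighborhood H1) fun i x y => y i ≠ x i := by
  simp [BCond, MeetsDemands, twosOnClosedNeighborhood, or_imp, forall_and, forall_eq]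

variable {H1} in
theorem card_twosOnClosedNeighborhood_le_card_edgeFinset {H2 : SimpleGraph (Fin k → Fin 2)}
    [DecidableRel H2.Adj] (hB : BCond H1 H2) (i : Fin k) :
    #(twosOnClosedNeighborhood H1 i) ≤ #H2.edgeFinset := by
  have htwo : ∀ z ∈ twosOnClosedNeighborhood H1 i, z i = 1 := fun z hz =>
    (Finset.mem_filter.1 hz).2 i (Finset.mem_insert_self _ _)
  refine H2.card_le_card_edgeFinset_of_forall_exists_adj_notMem _ fun x hx => ?_
  obtain ⟨y, hxy, hyx⟩ := (bCond_iff_meetsDemands H1 H2).1 hB i x hx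
  exact ⟨y, fun hy => hyx (by rw [htwo y hy, htwo x hx]), hxy⟩

end closedNeighborhood

/-- **Theorem.** If `H2` is `H1`-minimal (`k ≥ 2`), then
`2 ^ (k − min_i d_i − 1) ≤ |E(H2)| ≤ ∑ i, 2 ^ (k − d_i − 1)`,
where `d_i` is the degree of `i` in `H1`. -/
theorem H1Minimal_size_bounds (k : ℕ) (hk : 2 ≤ k) (H1 : SimpleGraph (Fin k))
    (H2 : SimpleGraph (Fin k → Fin 2)) [DecidableRel H1.Adj] [DecidableRel H2.Adj]
    (h : H1Minimal H1 H2) :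
    2 ^ (k - sInf (Set.range fun i => H1.degree i) - 1) ≤ H2.edgeFinset.card ∧
    H2.edgeFinset.card ≤ ∑ i : Fin k, 2 ^ (k - H1.degree i - 1) := by
  have hB : BCond H1 H2 := (comp2_mem_Bset_iff H1 H2).1 h.1
  have hmin : ∀ e ∈ H2.edgeSet, ¬ BCond H1 (H2.deleteEdges {e}) := fun e he =>
    (comp2_mem_Bset_iff H1 _).not.1 (h.2 _ (H2.deleteEdges_singleton_lt he))
  have : Nonempty (Fin k) := ⟨⟨0, by omega⟩⟩
  obtain ⟨i, hi⟩ := Nat.sInf_mem (Set.range_nonempty fun i => H1.degree i)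
  constructor
  · rw [← hi, ← card_twosOnClosedNeighborhood]
    exact card_twosOnClosedNeighborhood_le_card_edgeFinset hB i
  · simp only [bCond_iff_meetsDemands] at hB hmin
    simpa only [card_twosOnClosedNeighborhood] using
      H2.card_edgeFinset_le_sum_of_minimal_meetsDemands hB hmin
end
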